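/- Combining the two regimes: let μ ∈ (0,2), λ₀ > 0, and f_λ(x) = (λ + ⟨x⟩^{-μ})^{1/2}. Then there exists C = C(μ) > 0 such that for all λ ∈ [0, λ₀] and all u ∈ B(|x|), ‖f_λ^{-1/2} u‖_{B(f_λ⟨x⟩)} ≤ C ‖u‖_{B(|x|)}, where B(|x|) and B(f_λ⟨x⟩) are the dyadic Besov spaces of the multiplication operators |x| and f_λ(x)⟨x⟩ on L²(ℝ^d). -/

import Mathlib

open MeasureTheory Filter Topology
open scoped ENNReal

noncomputable section

/-- The dyadic radii: `R_0 = 0`, `R_j = 2^(j-1)` for `j ≥ 1`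
(here indexed so that `dyadicR (k+1) = 2^k`). -/
def dyadicR : ℕ → ℝ
  | 0 => 0
  | k + 1 => 2 ^ k

/-- For the self-adjoint multiplication operator by the real function `a` on `L²(μ)`,
the norm of the spectral block `F(R_k ≤ |A| < R_{k+1}) u`, i.e. of the restriction of
`u` to `{R_k ≤ |a| < R_{k+1}}`, valued in `ℝ≥0∞`. -/
def blockE {α : Type*} [MeasurableSpace α] (μ : Measure α) (a : α → ℝ) (u : α → ℂ)
    (k : ℕ) : ℝ≥0∞ :=
  eLpNorm (Set.indicator {x | dyadicR k ≤ |a x| ∧ |a x| < dyadicR (k + 1)} u) 2 μ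

/-- The Besov norm `‖u‖_{B(a)} = Σ_j R_j^{1/2} ‖F_j u‖` of the multiplication
operator by `a` on `L²(μ)`, valued in `ℝ≥0∞`; `u ∈ B(a)` iff this is finite. -/
def besovE {α : Type*} [MeasurableSpace α] (μ : Measure α) (a : α → ℝ) (u : α → ℂ) :
    ℝ≥0∞ :=
  ∑' k : ℕ, ENNReal.ofReal (Real.sqrt (dyadicR (k + 1))) * blockE μ a u k

/-- The dual Besov norm `‖u‖_{B(a)*} = sup_j R_j^{-1/2} ‖F_j u‖`, valued in `ℝ≥0∞`. -/
def dualE {α : Type*} [MeasurableSpace α] (μ : Measure α) (a : α → ℝ) (u : α → ℂ) :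
    ℝ≥0∞ :=
  ⨆ k : ℕ, (ENNReal.ofReal (Real.sqrt (dyadicR (k + 1))))⁻¹ * blockE μ a u k

/-- The Japanese bracket `⟨x⟩ = (|x|² + 1)^{1/2}` on `ℝ^d`. -/
def jap {d : ℕ} (x : EuclideanSpace ℝ (Fin d)) : ℝ := Real.sqrt (‖x‖ ^ 2 + 1)

/-!
On the annulus `R_k ≤ |x| < R_{k+1}` one has `⟨x⟩ ≈ R_{k+1}`, so for `0 ≤ μ ≤ 2` the weight
`f_λ⟨x⟩` varies there by at most a factor `2⁴`, and each annulus meets at most nine dyadic blocks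
of `f_λ⟨x⟩`. On the `j`-th block of `f_λ⟨x⟩` inside the `k`-th annulus, `f_λ ≥ ⟨x⟩⁻¹` gives
`R_{j+1} f_λ⁻¹ ≤ 2⟨x⟩ ≤ 4 R_{k+1}`: the factor `f_λ^{-1/2}` trades `R_{j+1}^{1/2}` for
`R_{k+1}^{1/2}`. Splitting every block of `f_λ⟨x⟩` along the annuli (`ℓ² ⊆ ℓ¹` for the pieces)
and resumming gives the bound with `C = 18`.
-/

open Set Function

lemma dyadicR_succ (k : ℕ) : dyadicR (k + 1) = max 1 (2 * dyadicR k) := by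
  cases k with
  | zero => simp [dyadicR]
  | succ k =>
    have : (1 : ℝ) ≤ 2 * 2 ^ k := by have := one_le_pow₀ (n := k) (one_le_two (α := ℝ)); linarith
    simp only [dyadicR, pow_succ, max_eq_right this]; ring

lemma dyadicR_nonneg (k : ℕ) : 0 ≤ dyadicR k := by
  cases k <;> simp [dyadicR]

lemma one_le_dyadicR_succ (k : ℕ) : 1 ≤ dyadicR (k + 1) :=
  (dyadicR_succ k).symm ▸ le_max_left _ _

lemma strictMono_dyadicR : StrictMono dyadicR :=
  strictMono_nat_of_lt_succ fun k => by
    rw [dyadicR_succ]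
    rcases (dyadicR_nonneg k).eq_or_lt with h | h
    · exact h ▸ lt_max_of_lt_left one_pos
    · exact lt_max_of_lt_right (by linarith)

lemma two_pow_mul_dyadicR_succ (n m : ℕ) : 2 ^ n * dyadicR (m + 1) = dyadicR (m + n + 1) := by
  simp only [dyadicR, pow_add]; ring

lemma dyadicR_succ_le_two_mul {k : ℕ} {r : ℝ} (hk : dyadicR k ≤ r) (hr : 1 ≤ r) :
    dyadicR (k + 1) ≤ 2 * r :=
  (dyadicR_succ k).symm ▸ max_le (by linarith) (by linarith)

lemma iUnion_Ico_dyadicR : ⋃ k, Ico (dyadicR k) (dyadicR (k + 1)) = Ici 0 := by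
  have hunb : ¬BddAbove (range dyadicR) := fun ⟨M, hM⟩ => by
    obtain ⟨k, hk⟩ := pow_unbounded_of_one_lt M (one_lt_two (α := ℝ))
    exact hk.not_ge (hM ⟨k + 1, rfl⟩)
  simpa [Order.succ_eq_add_one, dyadicR] using
    iUnion_Ico_map_succ_eq_Ici (fun k => strictMono_dyadicR.monotone (Nat.zero_le k)) hunb

section DyadicBlock

variable {α : Type*}

def dyadicBlock (a : α → ℝ) (k : ℕ) : Set α :=
  (fun x => |a x|) ⁻¹' Ico (dyadicR k) (dyadicR (k + 1))

lemma besovE_eq_tsum [MeasurableSpace α] (ν : Measure α) (a : α → ℝ) (u : α → ℂ) :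
    besovE ν a u = ∑' k, ENNReal.ofReal (Real.sqrt (dyadicR (k + 1))) *
      eLpNorm ((dyadicBlock a k).indicator u) 2 ν := rfl

lemma measurableSet_dyadicBlock [MeasurableSpace α] {a : α → ℝ} (ha : Measurable a) (k : ℕ) :
    MeasurableSet (dyadicBlock a k) :=
  ha.abs measurableSet_Ico

lemma pairwise_disjoint_dyadicBlock (a : α → ℝ) : Pairwise (Disjoint on (dyadicBlock a)) :=
  fun _ _ h => ((strictMono_dyadicR.monotone.pairwise_disjoint_on_Ico_succ h).preimage _)

lemma iUnion_dyadicBlock (a : α → ℝ) : ⋃ k, dyadicBlock a k = univ := by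
  simp only [dyadicBlock, ← preimage_iUnion, iUnion_Ico_dyadicR]
  exact eq_univ_of_forall fun x => abs_nonneg (a x)

lemma le_add_of_mem_dyadicBlock {a : α → ℝ} {x y : α} {j m n : ℕ} (hx : x ∈ dyadicBlock a j)
    (hy : y ∈ dyadicBlock a m) (hxy : |a x| ≤ 2 ^ n * |a y|) : j ≤ m + n := by
  have : dyadicR j < dyadicR (m + n + 1) := by
    rw [← two_pow_mul_dyadicR_succ]
    calc dyadicR j ≤ |a x| := hx.1
      _ ≤ 2 ^ n * |a y| := hxy
      _ < 2 ^ n * dyadicR (m + 1) := by gcongr; exact hy.2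
  exact Nat.lt_succ_iff.mp (strictMono_dyadicR.lt_iff_lt.mp this)

end DyadicBlock

lemma ENNReal.rpow_half_tsum_le_tsum_rpow_half {ι : Type*} (a : ι → ℝ≥0∞) :
    (∑' i, a i) ^ (1 / 2 : ℝ) ≤ ∑' i, a i ^ (1 / 2 : ℝ) := by
  set S := ∑' i, a i ^ (1 / 2 : ℝ)
  have hsq : ∀ b : ℝ≥0∞, b ^ (1 / 2 : ℝ) * b ^ (1 / 2 : ℝ) = b := fun b => by
    rw [← ENNReal.rpow_add_of_nonneg _ _ (by norm_num) (by norm_num)]; norm_num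
  have hsum : ∑' i, a i ≤ S * S :=
    calc ∑' i, a i = ∑' i, a i ^ (1 / 2 : ℝ) * a i ^ (1 / 2 : ℝ) := by simp only [hsq]
      _ ≤ ∑' i, a i ^ (1 / 2 : ℝ) * S :=
        ENNReal.tsum_le_tsum fun i => mul_le_mul_right (ENNReal.le_tsum i) _
      _ = S * S := ENNReal.tsum_mul_right
  calc (∑' i, a i) ^ (1 / 2 : ℝ) ≤ (S * S) ^ (1 / 2 : ℝ) := by gcongr
    _ = S := by rw [ENNReal.mul_rpow_of_nonneg _ _ (by norm_num), hsq]

namespace MeasureTheory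

variable {α E : Type*} [MeasurableSpace α] [NormedAddCommGroup E] {ν : Measure α}

lemma eLpNorm_indicator_iUnion_le_tsum {ι : Type*} [Countable ι] {T : ι → Set α}
    (hT : ∀ i, MeasurableSet (T i)) (hd : Pairwise (Disjoint on T)) (f : α → E) :
    eLpNorm ((⋃ i, T i).indicator f) 2 ν ≤ ∑' i, eLpNorm ((T i).indicator f) 2 ν := by
  simp only [eLpNorm_indicator_eq_eLpNorm_restrict (MeasurableSet.iUnion hT),
    eLpNorm_indicator_eq_eLpNorm_restrict (hT _),
    eLpNorm_eq_lintegral_rpow_enorm_toReal two_ne_zero ENNReal.ofNat_ne_top,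
    Measure.restrict_iUnion hd hT, lintegral_sum_measure, ENNReal.toReal_ofNat]
  exact ENNReal.rpow_half_tsum_le_tsum_rpow_half _

lemma ofReal_mul_eLpNorm_indicator_le [NormedSpace ℝ E] {p : ℝ≥0∞} {T : Set α} {f g : α → E} {c C : ℝ}
    (hc : 0 ≤ c) (hC : 0 ≤ C) (h : ∀ x ∈ T, c * ‖f x‖ ≤ C * ‖g x‖) :
    ENNReal.ofReal c * eLpNorm (T.indicator f) p ν
      ≤ ENNReal.ofReal C * eLpNorm (T.indicator g) p ν := by
  rw [← Real.enorm_eq_ofReal hc, ← Real.enorm_eq_ofReal hC, ← eLpNorm_const_smul,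
    ← eLpNorm_const_smul]
  refine eLpNorm_mono fun x => ?_
  by_cases hx : x ∈ T
  · simpa [hx, norm_smul, Real.norm_of_nonneg hc, Real.norm_of_nonneg hC] using h x hx
  · simp [hx]

lemma tsum_eLpNorm_indicator_inter_le {p : ℝ≥0∞} {B : ℕ → Set α} {A : Set α} (s : Finset ℕ)
    (hs : ∀ j ∉ s, B j ∩ A = ∅) (f : α → E) :
    ∑' j, eLpNorm ((B j ∩ A).indicator f) p ν ≤ s.card * eLpNorm (A.indicator f) p ν := by
  have hzero : ∀ j ∉ s, eLpNorm ((B j ∩ A).indicator f) p ν = 0 := fun j hj => by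
    rw [hs j hj, indicator_empty, eLpNorm_zero']
  rw [tsum_eq_sum hzero]
  calc ∑ j ∈ s, eLpNorm ((B j ∩ A).indicator f) p ν ≤ ∑ _j ∈ s, eLpNorm (A.indicator f) p ν :=
        Finset.sum_le_sum fun j _ => by
          rw [← indicator_indicator]
          exact eLpNorm_indicator_le _
    _ = s.card * eLpNorm (A.indicator f) p ν := by rw [Finset.sum_const, nsmul_eq_mul]

end MeasureTheory

section BesovComparison

variable {α : Type*} [MeasurableSpace α] {ν : Measure α}

lemma eLpNorm_indicator_le_tsum_inter_dyadicBlock {B : Set α} (hB : MeasurableSet B)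
    {a : α → ℝ} (ha : Measurable a) (f : α → ℂ) :
    eLpNorm (B.indicator f) 2 ν ≤ ∑' k, eLpNorm ((B ∩ dyadicBlock a k).indicator f) 2 ν := by
  have h := eLpNorm_indicator_iUnion_le_tsum (ν := ν)
    (fun k => hB.inter (measurableSet_dyadicBlock ha k))
    (fun _ _ hjk => (pairwise_disjoint_dyadicBlock a hjk).mono inter_subset_right
      inter_subset_right) f
  rwa [← inter_iUnion, iUnion_dyadicBlock, inter_univ] at h

lemma tsum_eLpNorm_indicator_dyadicBlock_inter_le {p : ℝ≥0∞} {b : α → ℝ} {A : Set α} {n : ℕ}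
    (hA : ∀ x ∈ A, ∀ y ∈ A, |b x| ≤ 2 ^ n * |b y|) (f : α → ℂ) :
    ∑' j, eLpNorm ((dyadicBlock b j ∩ A).indicator f) p ν
      ≤ (2 * n + 1) * eLpNorm (A.indicator f) p ν := by
  rcases A.eq_empty_or_nonempty with rfl | ⟨y, hy⟩
  · simp
  obtain ⟨m, hym⟩ := mem_iUnion.mp ((iUnion_dyadicBlock b).symm ▸ mem_univ y)
  have hs : ∀ j ∉ Finset.Icc (m - n) (m + n), dyadicBlock b j ∩ A = ∅ := by
    intro j hj
    refine eq_empty_of_forall_notMem fun x ⟨hxj, hxA⟩ => hj ?_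
    have := le_add_of_mem_dyadicBlock hxj hym (hA x hxA y hy)
    have := le_add_of_mem_dyadicBlock hym hxj (hA y hy x hxA)
    exact Finset.mem_Icc.mpr ⟨by omega, by omega⟩
  have hcard : ((Finset.Icc (m - n) (m + n)).card : ℝ≥0∞) ≤ 2 * n + 1 := by
    rw [Nat.card_Icc]; exact_mod_cast (by omega)
  calc _ ≤ (Finset.Icc (m - n) (m + n)).card * eLpNorm (A.indicator f) p ν :=
        tsum_eLpNorm_indicator_inter_le _ hs f
    _ ≤ _ := by gcongr

theorem besovE_le_of_dyadicBlock_bound {a b : α → ℝ} (ha : Measurable a) (hb : Measurable b)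
    {u v : α → ℂ} {n : ℕ} {C : ℝ} (hC : 0 ≤ C)
    (hosc : ∀ k, ∀ x ∈ dyadicBlock a k, ∀ y ∈ dyadicBlock a k, |b x| ≤ 2 ^ n * |b y|)
    (hbound : ∀ j k, ∀ x ∈ dyadicBlock b j ∩ dyadicBlock a k,
      Real.sqrt (dyadicR (j + 1)) * ‖v x‖ ≤ C * Real.sqrt (dyadicR (k + 1)) * ‖u x‖) :
    besovE ν b v ≤ ENNReal.ofReal ((2 * n + 1) * C) * besovE ν a u := by
  set s : ℕ → ℝ := fun k => Real.sqrt (dyadicR (k + 1))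
  calc besovE ν b v = ∑' j, ENNReal.ofReal (s j) * eLpNorm ((dyadicBlock b j).indicator v) 2 ν :=
        rfl
    _ ≤ ∑' j, ∑' k, ENNReal.ofReal (s j) *
          eLpNorm ((dyadicBlock b j ∩ dyadicBlock a k).indicator v) 2 ν := by
        gcongr with j
        rw [ENNReal.tsum_mul_left]
        gcongr
        exact eLpNorm_indicator_le_tsum_inter_dyadicBlock (measurableSet_dyadicBlock hb j) ha v
    _ = ∑' k, ∑' j, ENNReal.ofReal (s j) *
          eLpNorm ((dyadicBlock b j ∩ dyadicBlock a k).indicator v) 2 ν := ENNReal.tsum_comm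
    _ ≤ ∑' k, ∑' j, ENNReal.ofReal (C * s k) *
          eLpNorm ((dyadicBlock b j ∩ dyadicBlock a k).indicator u) 2 ν := by
        refine ENNReal.tsum_le_tsum fun k => ENNReal.tsum_le_tsum fun j => ?_
        exact ofReal_mul_eLpNorm_indicator_le (Real.sqrt_nonneg _) (by positivity) (hbound j k)
    _ ≤ ∑' k, ENNReal.ofReal (C * s k) *
          ((2 * n + 1) * eLpNorm ((dyadicBlock a k).indicator u) 2 ν) := by
        gcongr with k
        rw [ENNReal.tsum_mul_left]
        gcongr
        exact tsum_eLpNorm_indicator_dyadicBlock_inter_le (hosc k) u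
    _ = ENNReal.ofReal ((2 * n + 1) * C) * besovE ν a u := by
        rw [besovE_eq_tsum, ← ENNReal.tsum_mul_left]
        congr 1 with k
        rw [ENNReal.ofReal_mul hC, ENNReal.ofReal_mul (by positivity)]
        norm_cast
        ring

end BesovComparison

section JapaneseBracket

variable {d : ℕ}

lemma norm_le_jap (x : EuclideanSpace ℝ (Fin d)) : ‖x‖ ≤ jap x :=
  Real.le_sqrt_of_sq_le (by linarith)

lemma one_le_jap (x : EuclideanSpace ℝ (Fin d)) : 1 ≤ jap x :=
  Real.le_sqrt_of_sq_le (by nlinarith [norm_nonneg x])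

lemma jap_pos (x : EuclideanSpace ℝ (Fin d)) : 0 < jap x :=
  zero_lt_one.trans_le (one_le_jap x)

lemma jap_le_two_mul {x : EuclideanSpace ℝ (Fin d)} {r : ℝ} (hx : ‖x‖ ≤ r) (hr : 1 ≤ r) :
    jap x ≤ 2 * r :=
  Real.sqrt_le_iff.mpr ⟨by linarith, by nlinarith [norm_nonneg x]⟩

@[fun_prop]
lemma measurable_jap : Measurable (jap (d := d)) := by
  unfold jap; fun_prop

variable {x : EuclideanSpace ℝ (Fin d)} {k : ℕ}

lemma jap_le_two_mul_dyadicR (hx : x ∈ dyadicBlock (fun x => ‖x‖) k) :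
    jap x ≤ 2 * dyadicR (k + 1) :=
  jap_le_two_mul ((abs_norm x).ge.trans hx.2.le) (one_le_dyadicR_succ k)

lemma dyadicR_le_two_mul_jap (hx : x ∈ dyadicBlock (fun x => ‖x‖) k) :
    dyadicR (k + 1) ≤ 2 * jap x :=
  dyadicR_succ_le_two_mul ((hx.1.trans_eq (abs_norm x)).trans (norm_le_jap x)) (one_le_jap x)

end JapaneseBracket

section Weight

variable {μ lam p q : ℝ}

lemma one_le_sqrt_add_rpow_neg_mul (hμ2 : μ ≤ 2) (hlam : 0 ≤ lam) (hp : 1 ≤ p) :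
    1 ≤ Real.sqrt (lam + p ^ (-μ)) * p := by
  have hp0 : 0 < p := by linarith
  have h : 1 ≤ p ^ (-μ) * p ^ 2 := by
    rw [← Real.rpow_natCast, ← Real.rpow_add hp0]
    exact Real.one_le_rpow hp (by push_cast; linarith)
  have h' : 1 ≤ (lam + p ^ (-μ)) * p ^ 2 := by nlinarith [mul_nonneg hlam (sq_nonneg p)]
  calc 1 ≤ Real.sqrt ((lam + p ^ (-μ)) * p ^ 2) := Real.one_le_sqrt.mpr h'
    _ = Real.sqrt (lam + p ^ (-μ)) * p := by
      rw [Real.sqrt_mul (by positivity), Real.sqrt_sq hp0.le]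

lemma sqrt_add_rpow_neg_mul_le (hμ0 : 0 ≤ μ) (hμ2 : μ ≤ 2) (hlam : 0 ≤ lam) (hp : 0 < p)
    (hqp : q ≤ 4 * p) (hpq : p ≤ 4 * q) :
    Real.sqrt (lam + p ^ (-μ)) * p ≤ 2 ^ 4 * (Real.sqrt (lam + q ^ (-μ)) * q) := by
  have hq : 0 < q := by linarith
  have h4 : (4 : ℝ) ^ μ ≤ 16 := by
    calc (4 : ℝ) ^ μ ≤ 4 ^ (2 : ℝ) := Real.rpow_le_rpow_of_exponent_le (by norm_num) hμ2
      _ = 16 := by norm_num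
  have hpow : p ^ (-μ) ≤ 16 * q ^ (-μ) :=
    calc p ^ (-μ) = 4 ^ μ * (4 * p) ^ (-μ) := by
          rw [Real.mul_rpow (by norm_num) hp.le, ← mul_assoc, ← Real.rpow_add (by norm_num)]
          simp
      _ ≤ 16 * q ^ (-μ) :=
          mul_le_mul h4 (Real.rpow_le_rpow_of_nonpos hq hqp (by linarith)) (by positivity)
            (by norm_num)
  have hsqrt : Real.sqrt (lam + p ^ (-μ)) ≤ 4 * Real.sqrt (lam + q ^ (-μ)) :=
    calc Real.sqrt (lam + p ^ (-μ)) ≤ Real.sqrt (4 ^ 2 * (lam + q ^ (-μ))) :=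
          Real.sqrt_le_sqrt (by linarith)
      _ = 4 * Real.sqrt (lam + q ^ (-μ)) := by
          rw [Real.sqrt_mul (by positivity), Real.sqrt_sq (by norm_num)]
  calc Real.sqrt (lam + p ^ (-μ)) * p ≤ (4 * Real.sqrt (lam + q ^ (-μ))) * (4 * q) := by
        gcongr
    _ = 2 ^ 4 * (Real.sqrt (lam + q ^ (-μ)) * q) := by ring

lemma sqrt_mul_rpow_neg_quarter_le {t R c : ℝ} (ht : 0 < t) (hR : R ≤ c * Real.sqrt t) :
    Real.sqrt R * t ^ (-(1 / 4 : ℝ)) ≤ Real.sqrt c := by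
  have hquarter : t ^ (-(1 / 4 : ℝ)) = Real.sqrt (Real.sqrt t)⁻¹ := by
    rw [Real.sqrt_inv, Real.sqrt_eq_rpow, Real.sqrt_eq_rpow, ← Real.rpow_mul ht.le,
      ← Real.rpow_neg (by positivity)]
    norm_num
  rw [hquarter, ← Real.sqrt_mul' _ (by positivity)]
  exact Real.sqrt_le_sqrt ((mul_inv_le_iff₀ (by positivity)).mpr hR)

end Weight

section Application

variable {d : ℕ} {μ lam : ℝ} {x y : EuclideanSpace ℝ (Fin d)} {j k : ℕ}

lemma abs_weight_le_of_mem_dyadicBlock (hμ0 : 0 ≤ μ) (hμ2 : μ ≤ 2) (hlam : 0 ≤ lam)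
    (hx : x ∈ dyadicBlock (fun x => ‖x‖) k) (hy : y ∈ dyadicBlock (fun x => ‖x‖) k) :
    |Real.sqrt (lam + jap x ^ (-μ)) * jap x|
      ≤ 2 ^ 4 * |Real.sqrt (lam + jap y ^ (-μ)) * jap y| := by
  rw [abs_of_nonneg (by have := jap_pos x; positivity),
    abs_of_nonneg (by have := jap_pos y; positivity)]
  refine sqrt_add_rpow_neg_mul_le hμ0 hμ2 hlam (jap_pos x) ?_ ?_
  · linarith [jap_le_two_mul_dyadicR hy, dyadicR_le_two_mul_jap hx]
  · linarith [jap_le_two_mul_dyadicR hx, dyadicR_le_two_mul_jap hy]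

lemma sqrt_dyadicR_mul_rpow_le (hμ2 : μ ≤ 2) (hlam : 0 ≤ lam)
    (hx : x ∈ dyadicBlock (fun x => Real.sqrt (lam + jap x ^ (-μ)) * jap x) j ∩
      dyadicBlock (fun x => ‖x‖) k) :
    Real.sqrt (dyadicR (j + 1)) * (lam + jap x ^ (-μ)) ^ (-(1 / 4 : ℝ))
      ≤ 2 * Real.sqrt (dyadicR (k + 1)) := by
  have hweight := one_le_sqrt_add_rpow_neg_mul hμ2 hlam (one_le_jap x)
  have hj : dyadicR j ≤ Real.sqrt (lam + jap x ^ (-μ)) * jap x :=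
    hx.1.1.trans_eq (abs_of_nonneg (by linarith))
  have ht : 0 < lam + jap x ^ (-μ) :=
    add_pos_of_nonneg_of_pos hlam (Real.rpow_pos_of_pos (jap_pos x) _)
  calc Real.sqrt (dyadicR (j + 1)) * (lam + jap x ^ (-μ)) ^ (-(1 / 4 : ℝ))
      ≤ Real.sqrt (2 * jap x) := by
        refine sqrt_mul_rpow_neg_quarter_le ht ?_
        linarith [dyadicR_succ_le_two_mul hj hweight]
    _ ≤ Real.sqrt (2 ^ 2 * dyadicR (k + 1)) :=
        Real.sqrt_le_sqrt (by linarith [jap_le_two_mul_dyadicR hx.2])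
    _ = 2 * Real.sqrt (dyadicR (k + 1)) := by
        rw [Real.sqrt_mul (by norm_num), Real.sqrt_sq (by norm_num)]

end Application

theorem stmt15_general (d : ℕ) (μ : ℝ) (hμ0 : 0 < μ) (hμ2 : μ < 2) (lam₀ : ℝ) :
    ∃ C > (0 : ℝ), ∀ lam : ℝ, 0 ≤ lam → lam ≤ lam₀ → ∀ u : EuclideanSpace ℝ (Fin d) → ℂ,
      besovE volume (fun x => Real.sqrt (lam + jap x ^ (-μ)) * jap x)
          (fun x => (((lam + jap x ^ (-μ)) ^ (-(1 / 4 : ℝ)) : ℝ) • u x))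
        ≤ ENNReal.ofReal C * besovE volume (fun x => ‖x‖) u := by
  refine ⟨(2 * 4 + 1) * 2, by norm_num, fun lam hlam _ u => ?_⟩
  refine besovE_le_of_dyadicBlock_bound measurable_norm (by fun_prop) (n := 4) (by norm_num)
    (fun k x hx y hy => abs_weight_le_of_mem_dyadicBlock hμ0.le hμ2.le hlam hx hy)
    (fun j k x hx => ?_)
  have ht : 0 ≤ lam + jap x ^ (-μ) := by have := jap_pos x; positivity
  rw [norm_smul, Real.norm_of_nonneg (Real.rpow_nonneg ht _), ← mul_assoc]
  exact mul_le_mul_of_nonneg_right (sqrt_dyadicR_mul_rpow_le hμ2.le hlam hx) (norm_nonneg _)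

/-- for `μ ∈ (0,2)` and `λ₀ > 0` there is `C = C(μ) > 0` such that,
with `f_λ(x) = (λ + ⟨x⟩^{-μ})^{1/2}`, for all `λ ∈ [0, λ₀]` and all `u ∈ B(|x|)`,
`‖f_λ^{-1/2} u‖_{B(f_λ⟨x⟩)} ≤ C ‖u‖_{B(|x|)}`. -/
theorem stmt15 (d : ℕ) (μ : ℝ) (hμ0 : 0 < μ) (hμ2 : μ < 2) (lam₀ : ℝ) (hlam₀ : 0 < lam₀) :
    ∃ C > (0 : ℝ), ∀ lam : ℝ, 0 ≤ lam → lam ≤ lam₀ → ∀ u : EuclideanSpace ℝ (Fin d) → ℂ,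
      besovE volume (fun x => Real.sqrt (lam + jap x ^ (-μ)) * jap x)
          (fun x => (((lam + jap x ^ (-μ)) ^ (-(1 / 4 : ℝ)) : ℝ) • u x))
        ≤ ENNReal.ofReal C * besovE volume (fun x => ‖x‖) u :=
  stmt15_general d μ hμ0 hμ2 lam₀
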